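/- Consistency of the work definition with the internal description (Appendix A Lemma, first part): Let H_W and H_S be Hermitian matrices on ℂ^{d_W} and ℂ^{d_S}, kT > 0, and let U be a unitary on ℂ^{d_W} ⊗ ℂ^{d_S} with [U, H_W ⊗ 1 + 1 ⊗ H_S] = 0. Let ρ_W and ρ_S be density matrices on ℂ^{d_W} and ℂ^{d_S}, set σ := U(ρ_W ⊗ ρ_S)U†, ρ'_W := tr₂ σ and ρ'_S := tr₁ σ. Then the work transferred to the weight satisfies F_{H_W}(ρ'_W) − F_{H_W}(ρ_W) ≤ F_{H_S}(ρ_S) − F_{H_S}(ρ'_S). -/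

import Mathlib

open Matrix
open scoped Kronecker Matrix ComplexOrder

noncomputable section

/-- A density matrix: positive semidefinite with unit trace. -/
def IsDensityMatrix {n : Type*} [Fintype n] (ρ : Matrix n n ℂ) : Prop :=
  ρ.PosSemidef ∧ ρ.trace = 1

/-- von Neumann entropy `S(ρ) = -∑ λᵢ log λᵢ` (junk value 0 if not Hermitian). -/
noncomputable def vnEntropy {n : Type*} [Fintype n] [DecidableEq n]
    (ρ : Matrix n n ℂ) : ℝ :=
  if h : ρ.IsHermitian then -∑ i, (h.eigenvalues i) * Real.log (h.eigenvalues i) else 0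

/-- Non-equilibrium free energy `F(ρ) = tr(Hρ) - kT S(ρ)`. -/
noncomputable def freeEnergy {n : Type*} [Fintype n] [DecidableEq n]
    (kT : ℝ) (H ρ : Matrix n n ℂ) : ℝ :=
  (Matrix.trace (H * ρ)).re - kT * vnEntropy ρ

/-- Least eigenvalue of a Hermitian matrix (junk value 0 if not Hermitian). -/
noncomputable def lambdaMin {n : Type*} [Fintype n] [DecidableEq n]
    (H : Matrix n n ℂ) : ℝ :=
  if h : H.IsHermitian then ⨅ i, h.eigenvalues i else 0

/-- Partial trace over the second tensor factor. -/
def ptrace2 {m n : Type*} [Fintype n]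
    (σ : Matrix (m × n) (m × n) ℂ) : Matrix m m ℂ :=
  fun i j => ∑ k, σ (i, k) (j, k)

/-- Partial trace over the first tensor factor. -/
def ptrace1 {m n : Type*} [Fintype m]
    (σ : Matrix (m × n) (m × n) ℂ) : Matrix n n ℂ :=
  fun k l => ∑ i, σ (i, k) (i, l)

/-- Outer product `|v⟩⟨v|`. -/
def outer {n : Type*} (v : n → ℂ) : Matrix n n ℂ :=
  Matrix.vecMulVec v (star v)

/-- Kronecker product of vectors. -/
def kronVec {m n : Type*} (v : m → ℂ) (w : n → ℂ) : m × n → ℂ :=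
  fun p => v p.1 * w p.2

/-! The energy and the entropy balance separately.

Energy: `U` commutes with `H_W ⊗ 1 + 1 ⊗ H_S`, so the total energy of `σ = U (ρ_W ⊗ ρ_S) U†`
equals that of `ρ_W ⊗ ρ_S`; energies of local Hamiltonians are read off the partial traces.

Entropy: `S(σ) = S(ρ_W ⊗ ρ_S) = S(ρ_W) + S(ρ_S)`, and subadditivity gives
`S(σ) ≤ S(ρ'_W) + S(ρ'_S)`. Subadditivity is reduced to the classical one: in the product of the
eigenbases of the two marginals, the diagonal `q` of `σ` is a probability distribution whose
marginals are the spectra of `ρ'_W` and `ρ'_S`, and since the squared moduli of the entries of a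
unitary form a doubly stochastic matrix, Jensen's inequality gives `S(σ) ≤ H(q) ≤ H(q₁) + H(q₂)`.
-/

open Real

lemma sum_negMulLog_le_sum_negMulLog_mulVec {n : Type*} [Fintype n] [DecidableEq n]
    {D : Matrix n n ℝ} (hD : D ∈ doublyStochastic ℝ n) {x : n → ℝ} (hx : 0 ≤ x) :
    ∑ j, negMulLog (x j) ≤ ∑ i, negMulLog ((D *ᵥ x) i) := by
  have jensen (i : n) : ∑ j, D i j * negMulLog (x j) ≤ negMulLog ((D *ᵥ x) i) :=
    concaveOn_negMulLog.le_map_sum (fun j _ => nonneg_of_mem_doublyStochastic hD)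
      (sum_row_of_mem_doublyStochastic hD i) (fun j _ => hx j)
  calc ∑ j, negMulLog (x j) = ∑ i, ∑ j, D i j * negMulLog (x j) := by
        rw [Finset.sum_comm]
        simp only [← Finset.sum_mul, sum_col_of_mem_doublyStochastic hD, one_mul]
    _ ≤ ∑ i, negMulLog ((D *ᵥ x) i) := Finset.sum_le_sum fun i _ => jensen i

lemma sub_le_mul_log_sub_mul_log {p q : ℝ} (hp : 0 ≤ p) (hq : 0 ≤ q) (hpq : q = 0 → p = 0) :
    p - q ≤ p * log p - p * log q := by
  rcases hp.eq_or_lt with rfl | hp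
  · simpa using hq
  have hq : 0 < q := hq.lt_of_ne' fun h => hp.ne' (hpq h)
  have hlog := mul_le_mul_of_nonneg_left (log_le_sub_one_of_pos (div_pos hq hp)) hp.le
  rw [log_div hq.ne' hp.ne', mul_sub, mul_sub, mul_div_cancel₀ q hp.ne'] at hlog
  linarith

lemma sum_negMulLog_le_sum_negMulLog_fst_add_snd {m n : Type*} [Fintype m] [Fintype n]
    {q : m × n → ℝ} (hq : 0 ≤ q) (hq1 : ∑ p, q p = 1) :
    ∑ p, negMulLog (q p) ≤
      ∑ i, negMulLog (∑ k, q (i, k)) + ∑ k, negMulLog (∑ i, q (i, k)) := by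
  set a := fun i => ∑ k, q (i, k)
  set b := fun k => ∑ i, q (i, k)
  have ha1 : ∑ i, a i = 1 := by rwa [Fintype.sum_prod_type] at hq1
  have hb1 : ∑ k, b k = 1 := by rw [Finset.sum_comm]; exact ha1
  have hqa (p : m × n) : q p ≤ a p.1 :=
    Finset.single_le_sum (f := fun k => q (p.1, k)) (fun k _ => hq _) (Finset.mem_univ p.2)
  have hqb (p : m × n) : q p ≤ b p.2 :=
    Finset.single_le_sum (f := fun i => q (i, p.2)) (fun i _ => hq _) (Finset.mem_univ p.1)
  have hlog (p : m × n) : q p * log (a p.1 * b p.2) = q p * log (a p.1) + q p * log (b p.2) := by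
    rcases (hq p).eq_or_lt with h | h
    · simp [← h]
    · rw [log_mul (h.trans_le (hqa p)).ne' (h.trans_le (hqb p)).ne', mul_add]
  have klein (p : m × n) :
      q p - a p.1 * b p.2 ≤ q p * log (q p) - q p * log (a p.1 * b p.2) := by
    refine sub_le_mul_log_sub_mul_log (hq p)
      (mul_nonneg ((hq p).trans (hqa p)) ((hq p).trans (hqb p))) fun h => ?_
    rcases mul_eq_zero.1 h with h | h
    · exact le_antisymm (h ▸ hqa p) (hq p)
    · exact le_antisymm (h ▸ hqb p) (hq p)
  have hprod : ∑ p : m × n, a p.1 * b p.2 = 1 := by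
    simp only [Fintype.sum_prod_type, ← Finset.mul_sum, hb1, mul_one, ha1]
  have hcross : ∑ p, q p * log (a p.1 * b p.2)
      = ∑ i, a i * log (a i) + ∑ k, b k * log (b k) := by
    simp only [hlog, Finset.sum_add_distrib, Fintype.sum_prod_type, ← Finset.sum_mul]
    rw [Finset.sum_comm (f := fun i k => q (i, k) * log (b k))]
    simp only [← Finset.sum_mul]
    rfl
  have hgibbs := Finset.sum_le_sum fun p (_ : p ∈ Finset.univ) => klein p
  rw [Finset.sum_sub_distrib, Finset.sum_sub_distrib, hq1, hprod, hcross] at hgibbs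
  simp only [negMulLog, neg_mul, Finset.sum_neg_distrib]
  linarith

lemma sum_negMulLog_mul {m n : Type*} [Fintype m] [Fintype n] (x : m → ℝ) (y : n → ℝ) :
    ∑ p : m × n, negMulLog (x p.1 * y p.2)
      = (∑ k, y k) * ∑ i, negMulLog (x i) + (∑ i, x i) * ∑ k, negMulLog (y k) := by
  simp only [Fintype.sum_prod_type, negMulLog_mul, Finset.sum_add_distrib, ← Finset.sum_mul,
    ← Finset.mul_sum]

namespace Matrix

variable {n : Type*} [Fintype n] [DecidableEq n]

lemma map_normSq_mem_doublyStochastic {P : Matrix n n ℂ} (hP : P ∈ unitaryGroup n ℂ) :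
    P.map Complex.normSq ∈ doublyStochastic ℝ n := by
  refine mem_doublyStochastic_iff_sum.2
    ⟨fun i j => Complex.normSq_nonneg _, fun i => ?_, fun j => ?_⟩
  · have hrow := congrFun (congrFun (mem_unitaryGroup_iff.1 hP) i) i
    simp only [mul_apply, star_apply, one_apply_eq, Complex.star_def, Complex.mul_conj] at hrow
    exact_mod_cast hrow
  · have hcol := congrFun (congrFun (mem_unitaryGroup_iff'.1 hP) j) j
    simp only [mul_apply, star_apply, one_apply_eq, Complex.star_def,
      ← Complex.normSq_eq_conj_mul_self] at hcol
    exact_mod_cast hcol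

lemma re_mul_diagonal_mul_conjTranspose_apply_self (P : Matrix n n ℂ) (d : n → ℝ) (i : n) :
    ((P * diagonal (RCLike.ofReal ∘ d : n → ℂ) * Pᴴ) i i).re
      = (P.map Complex.normSq *ᵥ d) i := by
  rw [mul_apply, Complex.re_sum]
  refine Finset.sum_congr rfl fun j _ => ?_
  rw [mul_diagonal, conjTranspose_apply, Function.comp_apply, mul_right_comm, Complex.star_def,
    Complex.mul_conj]
  simp

lemma IsHermitian.eq_eigenvectorUnitary_mul_diagonal_mul {A : Matrix n n ℂ}
    (hA : A.IsHermitian) :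
    A = (hA.eigenvectorUnitary : Matrix n n ℂ) * diagonal (RCLike.ofReal ∘ hA.eigenvalues)
      * (hA.eigenvectorUnitary : Matrix n n ℂ)ᴴ := by
  simpa [Unitary.conjStarAlgAut_apply, star_eq_conjTranspose] using hA.spectral_theorem

lemma IsHermitian.conjTranspose_eigenvectorUnitary_mul_mul {A : Matrix n n ℂ}
    (hA : A.IsHermitian) :
    (hA.eigenvectorUnitary : Matrix n n ℂ)ᴴ * A * (hA.eigenvectorUnitary : Matrix n n ℂ)
      = diagonal (RCLike.ofReal ∘ hA.eigenvalues) := by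
  simpa [Unitary.conjStarAlgAut_apply, star_eq_conjTranspose] using
    hA.conjStarAlgAut_star_eigenvectorUnitary

lemma IsHermitian.sum_comp_eigenvalues_of_eq_mul_diagonal_mul {A : Matrix n n ℂ}
    (hA : A.IsHermitian) {W : Matrix n n ℂ} (hW : W ∈ unitaryGroup n ℂ) {c : n → ℝ}
    (hAc : A = W * diagonal (RCLike.ofReal ∘ c) * Wᴴ) (f : ℝ → ℝ) :
    ∑ i, f (hA.eigenvalues i) = ∑ i, f (c i) := by
  have hchar : A.charpoly = (diagonal (RCLike.ofReal ∘ c)).charpoly := by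
    rw [hAc, charpoly_mul_comm, ← Matrix.mul_assoc, ← star_eq_conjTranspose,
      mem_unitaryGroup_iff'.1 hW, Matrix.one_mul]
  have hroots : Multiset.map (RCLike.ofReal ∘ hA.eigenvalues : n → ℂ) Finset.univ.val
      = Multiset.map (RCLike.ofReal ∘ c) Finset.univ.val := by
    rw [← hA.roots_charpoly_eq_eigenvalues, hchar, charpoly_diagonal, Polynomial.roots_prod]
    · simp
    · simp [Finset.prod_ne_zero_iff, Polynomial.X_sub_C_ne_zero]
  have hsum := congrArg (fun s => (s.map (f ∘ RCLike.re)).sum) hroots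
  simp only [Multiset.map_map] at hsum
  exact hsum

lemma IsHermitian.sum_eigenvalues_eq_one {A : Matrix n n ℂ} (hA : A.IsHermitian)
    (hA1 : trace A = 1) : ∑ i, hA.eigenvalues i = 1 := by
  simpa [hA1] using (congrArg Complex.re hA.trace_eq_sum_eigenvalues).symm

lemma PosSemidef.sum_negMulLog_eigenvalues_le {A : Matrix n n ℂ} (hA : A.PosSemidef)
    {W : Matrix n n ℂ} (hW : W ∈ unitaryGroup n ℂ) :
    ∑ i, negMulLog (hA.1.eigenvalues i) ≤ ∑ i, negMulLog ((Wᴴ * A * W) i i).re := by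
  set V : Matrix n n ℂ := ↑hA.1.eigenvectorUnitary
  have hconj : Wᴴ * A * W
      = (Wᴴ * V) * diagonal (RCLike.ofReal ∘ hA.1.eigenvalues) * (Wᴴ * V)ᴴ := by
    conv_lhs => rw [hA.1.eq_eigenvectorUnitary_mul_diagonal_mul]
    simp only [conjTranspose_mul, conjTranspose_conjTranspose, Matrix.mul_assoc]
    rfl
  have hP : Wᴴ * V ∈ unitaryGroup n ℂ :=
    mul_mem (star_eq_conjTranspose W ▸ Unitary.star_mem hW) hA.1.eigenvectorUnitary.2
  simp only [hconj, re_mul_diagonal_mul_conjTranspose_apply_self]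
  exact sum_negMulLog_le_sum_negMulLog_mulVec (map_normSq_mem_doublyStochastic hP)
    hA.eigenvalues_nonneg

end Matrix

section PartialTrace

variable {m n : Type*}

lemma ptrace2_kronecker_one_mul [Fintype m] [Fintype n] [DecidableEq n] (A : Matrix m m ℂ)
    (σ : Matrix (m × n) (m × n) ℂ) :
    ptrace2 ((A ⊗ₖ (1 : Matrix n n ℂ)) * σ) = A * ptrace2 σ := by
  ext i j
  simp only [ptrace2, mul_apply, kroneckerMap_apply, one_apply, mul_ite, mul_one, mul_zero,
    ite_mul, zero_mul, Fintype.sum_prod_type, Finset.sum_ite_eq, Finset.mem_univ, ↓reduceIte,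
    Finset.mul_sum]
  exact Finset.sum_comm

lemma ptrace2_mul_kronecker_one [Fintype m] [Fintype n] [DecidableEq n] (A : Matrix m m ℂ)
    (σ : Matrix (m × n) (m × n) ℂ) :
    ptrace2 (σ * (A ⊗ₖ (1 : Matrix n n ℂ))) = ptrace2 σ * A := by
  ext i j
  simp only [ptrace2, mul_apply, kroneckerMap_apply, one_apply, mul_ite, mul_one, mul_zero,
    Fintype.sum_prod_type, Finset.sum_ite_eq', Finset.mem_univ, ↓reduceIte, Finset.sum_mul]
  exact Finset.sum_comm

lemma ptrace2_one_kronecker_mul [Fintype m] [Fintype n] [DecidableEq m] (B : Matrix n n ℂ)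
    (σ : Matrix (m × n) (m × n) ℂ) :
    ptrace2 (((1 : Matrix m m ℂ) ⊗ₖ B) * σ) = ptrace2 (σ * ((1 : Matrix m m ℂ) ⊗ₖ B)) := by
  ext i j
  simp only [ptrace2, mul_apply, kroneckerMap_apply, one_apply, ite_mul, one_mul, zero_mul,
    Fintype.sum_prod_type, Finset.sum_ite_irrel, Finset.sum_const_zero, Finset.sum_ite_eq,
    Finset.mem_univ, ↓reduceIte, mul_ite, mul_zero, Finset.sum_ite_eq']
  rw [Finset.sum_comm]
  simp only [mul_comm]

lemma ptrace1_one_kronecker_mul [Fintype m] [Fintype n] [DecidableEq m] (B : Matrix n n ℂ)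
    (σ : Matrix (m × n) (m × n) ℂ) :
    ptrace1 (((1 : Matrix m m ℂ) ⊗ₖ B) * σ) = B * ptrace1 σ := by
  ext k l
  simp only [ptrace1, mul_apply, kroneckerMap_apply, one_apply, ite_mul, one_mul, zero_mul,
    Fintype.sum_prod_type, Finset.sum_ite_irrel, Finset.sum_const_zero, Finset.sum_ite_eq,
    Finset.mem_univ, ↓reduceIte, Finset.mul_sum]
  exact Finset.sum_comm

lemma ptrace1_mul_one_kronecker [Fintype m] [Fintype n] [DecidableEq m] (B : Matrix n n ℂ)
    (σ : Matrix (m × n) (m × n) ℂ) :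
    ptrace1 (σ * ((1 : Matrix m m ℂ) ⊗ₖ B)) = ptrace1 σ * B := by
  ext k l
  simp only [ptrace1, mul_apply, kroneckerMap_apply, one_apply, ite_mul, one_mul, zero_mul,
    mul_ite, mul_zero, Fintype.sum_prod_type, Finset.sum_ite_irrel, Finset.sum_const_zero,
    Finset.sum_ite_eq', Finset.mem_univ, ↓reduceIte, Finset.sum_mul]
  exact Finset.sum_comm

lemma ptrace1_kronecker_one_mul [Fintype m] [Fintype n] [DecidableEq n] (A : Matrix m m ℂ)
    (σ : Matrix (m × n) (m × n) ℂ) :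
    ptrace1 ((A ⊗ₖ (1 : Matrix n n ℂ)) * σ) = ptrace1 (σ * (A ⊗ₖ (1 : Matrix n n ℂ))) := by
  ext k l
  simp only [ptrace1, mul_apply, kroneckerMap_apply, one_apply, mul_ite, mul_one, mul_zero,
    ite_mul, zero_mul, Fintype.sum_prod_type, Finset.sum_ite_eq, Finset.mem_univ, ↓reduceIte,
    Finset.sum_ite_eq']
  rw [Finset.sum_comm]
  simp only [mul_comm]

lemma trace_ptrace2 [Fintype m] [Fintype n] (σ : Matrix (m × n) (m × n) ℂ) :
    trace (ptrace2 σ) = trace σ := by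
  rw [trace, trace, Fintype.sum_prod_type]
  rfl

lemma trace_ptrace1 [Fintype m] [Fintype n] (σ : Matrix (m × n) (m × n) ℂ) :
    trace (ptrace1 σ) = trace σ := by
  rw [trace, trace, Fintype.sum_prod_type, Finset.sum_comm]
  rfl

lemma trace_mul_ptrace2 [Fintype m] [Fintype n] [DecidableEq n] (A : Matrix m m ℂ)
    (σ : Matrix (m × n) (m × n) ℂ) :
    trace (A * ptrace2 σ) = trace ((A ⊗ₖ (1 : Matrix n n ℂ)) * σ) := by
  rw [← ptrace2_kronecker_one_mul, trace_ptrace2]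

lemma trace_mul_ptrace1 [Fintype m] [Fintype n] [DecidableEq m] (B : Matrix n n ℂ)
    (σ : Matrix (m × n) (m × n) ℂ) :
    trace (B * ptrace1 σ) = trace (((1 : Matrix m m ℂ) ⊗ₖ B) * σ) := by
  rw [← ptrace1_one_kronecker_mul, trace_ptrace1]

lemma conjTranspose_ptrace2 [Fintype n] (σ : Matrix (m × n) (m × n) ℂ) :
    (ptrace2 σ)ᴴ = ptrace2 σᴴ := by
  ext i j
  simp [ptrace2]

lemma conjTranspose_ptrace1 [Fintype m] (σ : Matrix (m × n) (m × n) ℂ) :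
    (ptrace1 σ)ᴴ = ptrace1 σᴴ := by
  ext k l
  simp [ptrace1]

lemma isHermitian_ptrace2 [Fintype n] {σ : Matrix (m × n) (m × n) ℂ} (hσ : σ.IsHermitian) :
    (ptrace2 σ).IsHermitian := by
  rw [IsHermitian, conjTranspose_ptrace2, hσ]

lemma isHermitian_ptrace1 [Fintype m] {σ : Matrix (m × n) (m × n) ℂ} (hσ : σ.IsHermitian) :
    (ptrace1 σ).IsHermitian := by
  rw [IsHermitian, conjTranspose_ptrace1, hσ]

lemma ptrace2_conjTranspose_kronecker_mul_mul [Fintype m] [Fintype n] [DecidableEq m]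
    [DecidableEq n] (A : Matrix m m ℂ) {B : Matrix n n ℂ} (hB : B ∈ unitaryGroup n ℂ)
    (σ : Matrix (m × n) (m × n) ℂ) :
    ptrace2 ((A ⊗ₖ B)ᴴ * σ * (A ⊗ₖ B)) = Aᴴ * ptrace2 σ * A := by
  have hsplit : A ⊗ₖ B = ((1 : Matrix m m ℂ) ⊗ₖ B) * (A ⊗ₖ (1 : Matrix n n ℂ)) := by
    rw [← mul_kronecker_mul, Matrix.one_mul, Matrix.mul_one]
  have hBB : ((1 : Matrix m m ℂ) ⊗ₖ B) * ((1 : Matrix m m ℂ) ⊗ₖ Bᴴ) = 1 := by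
    rw [← mul_kronecker_mul, Matrix.one_mul, ← star_eq_conjTranspose, mem_unitaryGroup_iff.1 hB,
      one_kronecker_one]
  rw [hsplit, conjTranspose_mul, conjTranspose_kronecker, conjTranspose_kronecker,
    conjTranspose_one, conjTranspose_one, Matrix.mul_assoc, Matrix.mul_assoc,
    ← Matrix.mul_assoc σ, ← Matrix.mul_assoc, ← Matrix.mul_assoc, ptrace2_mul_kronecker_one,
    Matrix.mul_assoc, ptrace2_kronecker_one_mul, ptrace2_one_kronecker_mul, Matrix.mul_assoc σ,
    hBB, Matrix.mul_one]

lemma ptrace1_conjTranspose_kronecker_mul_mul [Fintype m] [Fintype n] [DecidableEq m]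
    [DecidableEq n] {A : Matrix m m ℂ} (hA : A ∈ unitaryGroup m ℂ) (B : Matrix n n ℂ)
    (σ : Matrix (m × n) (m × n) ℂ) :
    ptrace1 ((A ⊗ₖ B)ᴴ * σ * (A ⊗ₖ B)) = Bᴴ * ptrace1 σ * B := by
  have hsplit : A ⊗ₖ B = (A ⊗ₖ (1 : Matrix n n ℂ)) * ((1 : Matrix m m ℂ) ⊗ₖ B) := by
    rw [← mul_kronecker_mul, Matrix.one_mul, Matrix.mul_one]
  have hAA : (A ⊗ₖ (1 : Matrix n n ℂ)) * (Aᴴ ⊗ₖ (1 : Matrix n n ℂ)) = 1 := by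
    rw [← mul_kronecker_mul, Matrix.one_mul, ← star_eq_conjTranspose, mem_unitaryGroup_iff.1 hA,
      one_kronecker_one]
  rw [hsplit, conjTranspose_mul, conjTranspose_kronecker, conjTranspose_kronecker,
    conjTranspose_one, conjTranspose_one, Matrix.mul_assoc, Matrix.mul_assoc,
    ← Matrix.mul_assoc σ, ← Matrix.mul_assoc, ← Matrix.mul_assoc, ptrace1_mul_one_kronecker,
    Matrix.mul_assoc, ptrace1_one_kronecker_mul, ptrace1_kronecker_one_mul, Matrix.mul_assoc σ,
    hAA, Matrix.mul_one]

end PartialTrace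

lemma IsDensityMatrix.kronecker {m n : Type*} [Fintype m] [Fintype n] {ρ : Matrix m m ℂ}
    {τ : Matrix n n ℂ} (hρ : IsDensityMatrix ρ) (hτ : IsDensityMatrix τ) :
    IsDensityMatrix (ρ ⊗ₖ τ) :=
  ⟨hρ.1.kronecker hτ.1, by rw [trace_kronecker, hρ.2, hτ.2, one_mul]⟩

section DensityMatrix

variable {m n : Type*} [Fintype m] [Fintype n] [DecidableEq m] [DecidableEq n]

lemma IsDensityMatrix.unitary_conj {ρ U : Matrix n n ℂ} (hρ : IsDensityMatrix ρ)
    (hU : U ∈ unitaryGroup n ℂ) : IsDensityMatrix (U * ρ * Uᴴ) :=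
  ⟨hρ.1.mul_mul_conjTranspose_same U, by
    rw [trace_mul_cycle, ← star_eq_conjTranspose, mem_unitaryGroup_iff'.1 hU, Matrix.one_mul,
      hρ.2]⟩

lemma vnEntropy_eq_sum_negMulLog {ρ : Matrix n n ℂ} (hρ : ρ.IsHermitian) :
    vnEntropy ρ = ∑ i, negMulLog (hρ.eigenvalues i) := by
  simp [vnEntropy, hρ, negMulLog]

lemma vnEntropy_eq_of_eq_mul_diagonal_mul {ρ : Matrix n n ℂ} (hρ : ρ.IsHermitian)
    {W : Matrix n n ℂ} (hW : W ∈ unitaryGroup n ℂ) {c : n → ℝ}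
    (hρc : ρ = W * diagonal (RCLike.ofReal ∘ c) * Wᴴ) :
    vnEntropy ρ = ∑ i, negMulLog (c i) := by
  rw [vnEntropy_eq_sum_negMulLog hρ, hρ.sum_comp_eigenvalues_of_eq_mul_diagonal_mul hW hρc]

lemma vnEntropy_unitary_conj {ρ U : Matrix n n ℂ} (hρ : ρ.IsHermitian)
    (hU : U ∈ unitaryGroup n ℂ) : vnEntropy (U * ρ * Uᴴ) = vnEntropy ρ := by
  rw [vnEntropy_eq_sum_negMulLog hρ]
  refine vnEntropy_eq_of_eq_mul_diagonal_mul (isHermitian_mul_mul_conjTranspose U hρ)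
    (mul_mem hU hρ.eigenvectorUnitary.2) ?_
  conv_lhs => rw [hρ.eq_eigenvectorUnitary_mul_diagonal_mul]
  simp only [conjTranspose_mul, Matrix.mul_assoc]

lemma vnEntropy_kronecker {ρ : Matrix m m ℂ} {τ : Matrix n n ℂ} (hρ : ρ.IsHermitian)
    (hτ : τ.IsHermitian) (hρ1 : trace ρ = 1) (hτ1 : trace τ = 1) :
    vnEntropy (ρ ⊗ₖ τ) = vnEntropy ρ + vnEntropy τ := by
  have hρτ : (ρ ⊗ₖ τ).IsHermitian := by
    rw [IsHermitian, conjTranspose_kronecker, hρ.eq, hτ.eq]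
  have hdiag : ρ ⊗ₖ τ = ((hρ.eigenvectorUnitary : Matrix m m ℂ) ⊗ₖ hτ.eigenvectorUnitary)
      * diagonal (RCLike.ofReal ∘ fun p => hρ.eigenvalues p.1 * hτ.eigenvalues p.2)
      * ((hρ.eigenvectorUnitary : Matrix m m ℂ) ⊗ₖ hτ.eigenvectorUnitary)ᴴ := by
    conv_lhs => rw [hρ.eq_eigenvectorUnitary_mul_diagonal_mul,
      hτ.eq_eigenvectorUnitary_mul_diagonal_mul]
    rw [mul_kronecker_mul, mul_kronecker_mul, diagonal_kronecker_diagonal, conjTranspose_kronecker]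
    congr 3
    ext p
    simp
  rw [vnEntropy_eq_of_eq_mul_diagonal_mul hρτ
      (kronecker_mem_unitary hρ.eigenvectorUnitary.2 hτ.eigenvectorUnitary.2) hdiag,
    sum_negMulLog_mul, hρ.sum_eigenvalues_eq_one hρ1, hτ.sum_eigenvalues_eq_one hτ1, one_mul,
    one_mul, vnEntropy_eq_sum_negMulLog hρ, vnEntropy_eq_sum_negMulLog hτ]

theorem IsDensityMatrix.vnEntropy_le_vnEntropy_ptrace2_add_vnEntropy_ptrace1
    {σ : Matrix (m × n) (m × n) ℂ} (hσ : IsDensityMatrix σ) :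
    vnEntropy σ ≤ vnEntropy (ptrace2 σ) + vnEntropy (ptrace1 σ) := by
  obtain ⟨hσ, hσ1⟩ := hσ
  have hA := isHermitian_ptrace2 hσ.1
  have hB := isHermitian_ptrace1 hσ.1
  set W := (hA.eigenvectorUnitary : Matrix m m ℂ) ⊗ₖ (hB.eigenvectorUnitary : Matrix n n ℂ)
  have hW : W ∈ unitaryGroup (m × n) ℂ :=
    kronecker_mem_unitary hA.eigenvectorUnitary.2 hB.eigenvectorUnitary.2
  set q : m × n → ℝ := fun p => ((Wᴴ * σ * W) p p).re
  have hq : 0 ≤ q := fun p =>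
    (Complex.le_def.1 (hσ.conjTranspose_mul_mul_same W).diag_nonneg).1
  have hq1 : ∑ p, q p = 1 := by
    have htr : trace (Wᴴ * σ * W) = 1 := by
      rw [trace_mul_cycle, ← star_eq_conjTranspose, mem_unitaryGroup_iff.1 hW, Matrix.one_mul,
        hσ1]
    simpa [trace] using congrArg Complex.re htr
  have hqA (i : m) : ∑ k, q (i, k) = hA.eigenvalues i := by
    have hdiag := congrArg (fun M => (M i i).re)
      (ptrace2_conjTranspose_kronecker_mul_mul (hA.eigenvectorUnitary : Matrix m m ℂ)
        hB.eigenvectorUnitary.2 σ)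
    simpa [hA.conjTranspose_eigenvectorUnitary_mul_mul, ptrace2, q] using hdiag
  have hqB (k : n) : ∑ i, q (i, k) = hB.eigenvalues k := by
    have hdiag := congrArg (fun M => (M k k).re)
      (ptrace1_conjTranspose_kronecker_mul_mul hA.eigenvectorUnitary.2
        (hB.eigenvectorUnitary : Matrix n n ℂ) σ)
    simpa [hB.conjTranspose_eigenvectorUnitary_mul_mul, ptrace1, q] using hdiag
  calc vnEntropy σ = ∑ p, negMulLog (hσ.1.eigenvalues p) := vnEntropy_eq_sum_negMulLog hσ.1
    _ ≤ ∑ p, negMulLog (q p) := hσ.sum_negMulLog_eigenvalues_le hW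
    _ ≤ ∑ i, negMulLog (∑ k, q (i, k)) + ∑ k, negMulLog (∑ i, q (i, k)) :=
      sum_negMulLog_le_sum_negMulLog_fst_add_snd hq hq1
    _ = vnEntropy (ptrace2 σ) + vnEntropy (ptrace1 σ) := by
      simp only [hqA, hqB, vnEntropy_eq_sum_negMulLog hA, vnEntropy_eq_sum_negMulLog hB]

end DensityMatrix

section Energy

variable {m n : Type*} [Fintype m] [Fintype n] [DecidableEq m] [DecidableEq n]

lemma trace_mul_ptrace2_add_trace_mul_ptrace1 (A : Matrix m m ℂ) (B : Matrix n n ℂ)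
    (σ : Matrix (m × n) (m × n) ℂ) :
    trace (A * ptrace2 σ) + trace (B * ptrace1 σ)
      = trace ((A ⊗ₖ (1 : Matrix n n ℂ) + (1 : Matrix m m ℂ) ⊗ₖ B) * σ) := by
  rw [trace_mul_ptrace2, trace_mul_ptrace1, Matrix.add_mul, trace_add]

lemma trace_add_kronecker_mul_kronecker (A ρ : Matrix m m ℂ) (B τ : Matrix n n ℂ) :
    trace ((A ⊗ₖ (1 : Matrix n n ℂ) + (1 : Matrix m m ℂ) ⊗ₖ B) * (ρ ⊗ₖ τ))
      = trace (A * ρ) * trace τ + trace ρ * trace (B * τ) := by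
  rw [Matrix.add_mul, ← mul_kronecker_mul, ← mul_kronecker_mul, Matrix.one_mul, Matrix.one_mul,
    trace_add, trace_kronecker, trace_kronecker]

lemma trace_mul_unitary_conj_of_commute {H U : Matrix n n ℂ} (hU : U ∈ unitaryGroup n ℂ)
    (hHU : U * H = H * U) (ρ : Matrix n n ℂ) : trace (H * (U * ρ * Uᴴ)) = trace (H * ρ) := by
  rw [← Matrix.mul_assoc, ← Matrix.mul_assoc, ← hHU, Matrix.mul_assoc U, trace_mul_cycle,
    ← star_eq_conjTranspose, mem_unitaryGroup_iff'.1 hU, Matrix.one_mul]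

end Energy

theorem work_bounded_by_system_free_energy_decrease_general
    {dW dS : ℕ}
    (HW : Matrix (Fin dW) (Fin dW) ℂ) (HS : Matrix (Fin dS) (Fin dS) ℂ)
    (kT : ℝ) (hkT : 0 < kT)
    (U : Matrix (Fin dW × Fin dS) (Fin dW × Fin dS) ℂ)
    (hU : U ∈ Matrix.unitaryGroup (Fin dW × Fin dS) ℂ)
    (hUcomm : U * (HW ⊗ₖ (1 : Matrix (Fin dS) (Fin dS) ℂ)
        + (1 : Matrix (Fin dW) (Fin dW) ℂ) ⊗ₖ HS)
      = (HW ⊗ₖ (1 : Matrix (Fin dS) (Fin dS) ℂ)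
        + (1 : Matrix (Fin dW) (Fin dW) ℂ) ⊗ₖ HS) * U)
    (ρW : Matrix (Fin dW) (Fin dW) ℂ) (hρW : IsDensityMatrix ρW)
    (ρS : Matrix (Fin dS) (Fin dS) ℂ) (hρS : IsDensityMatrix ρS) :
    freeEnergy kT HW (ptrace2 (U * (ρW ⊗ₖ ρS) * Uᴴ)) - freeEnergy kT HW ρW
      ≤ freeEnergy kT HS ρS - freeEnergy kT HS (ptrace1 (U * (ρW ⊗ₖ ρS) * Uᴴ)) := by
  set σ := U * (ρW ⊗ₖ ρS) * Uᴴ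
  have hρ := hρW.kronecker hρS
  have henergy : (trace (HW * ptrace2 σ)).re + (trace (HS * ptrace1 σ)).re
      = (trace (HW * ρW)).re + (trace (HS * ρS)).re := by
    rw [← Complex.add_re, ← Complex.add_re, trace_mul_ptrace2_add_trace_mul_ptrace1,
      trace_mul_unitary_conj_of_commute hU hUcomm, trace_add_kronecker_mul_kronecker, hρW.2,
      hρS.2, mul_one, one_mul]
  have hentropy :
      vnEntropy ρW + vnEntropy ρS ≤ vnEntropy (ptrace2 σ) + vnEntropy (ptrace1 σ) := by
    rw [← vnEntropy_kronecker hρW.1.1 hρS.1.1 hρW.2 hρS.2, ← vnEntropy_unitary_conj hρ.1.1 hU]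
    exact (hρ.unitary_conj hU).vnEntropy_le_vnEntropy_ptrace2_add_vnEntropy_ptrace1
  unfold freeEnergy
  linarith [mul_le_mul_of_nonneg_left hentropy hkT.le]

/-- Appendix A Lemma, first part: the work transferred to the weight never
exceeds the free-energy decrease of the system. -/
theorem work_bounded_by_system_free_energy_decrease
    {dW dS : ℕ}
    (HW : Matrix (Fin dW) (Fin dW) ℂ) (HS : Matrix (Fin dS) (Fin dS) ℂ)
    (hHW : HW.IsHermitian) (hHS : HS.IsHermitian)
    (kT : ℝ) (hkT : 0 < kT)
    (U : Matrix (Fin dW × Fin dS) (Fin dW × Fin dS) ℂ)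
    (hU : U ∈ Matrix.unitaryGroup (Fin dW × Fin dS) ℂ)
    (hUcomm : U * (HW ⊗ₖ (1 : Matrix (Fin dS) (Fin dS) ℂ)
        + (1 : Matrix (Fin dW) (Fin dW) ℂ) ⊗ₖ HS)
      = (HW ⊗ₖ (1 : Matrix (Fin dS) (Fin dS) ℂ)
        + (1 : Matrix (Fin dW) (Fin dW) ℂ) ⊗ₖ HS) * U)
    (ρW : Matrix (Fin dW) (Fin dW) ℂ) (hρW : IsDensityMatrix ρW)
    (ρS : Matrix (Fin dS) (Fin dS) ℂ) (hρS : IsDensityMatrix ρS) :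
    freeEnergy kT HW (ptrace2 (U * (ρW ⊗ₖ ρS) * Uᴴ)) - freeEnergy kT HW ρW
      ≤ freeEnergy kT HS ρS - freeEnergy kT HS (ptrace1 (U * (ρW ⊗ₖ ρS) * Uᴴ)) :=
  work_bounded_by_system_free_energy_decrease_general HW HS kT hkT U hU hUcomm ρW hρW ρS hρS

end
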